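/- Let Φ(m) denote the number of nonempty subsets S of {1, 2, …, m} such that gcd(S) is relatively prime to m. Then for every positive integer n, ∑_{k=1}^{n} (2^k − 1)·ω(n−k) = ∑_{m=1}^{n} Φ(m) · ( ∑_{j=0}^{⌊(n−m)/m⌋} ω((n−m) − j·m) ). -/

import Mathlib

open scoped Classical

/-- The pentagonal-number coefficient function `ω`: `ω 0 = 1`,
`ω m = (-1)^k` if `m = (3k² + k)/2` or `m = (3k² - k)/2` for a positive integer `k`,
and `ω m = 0` otherwise (in particular for negative `m`). -/
noncomputable def pentaCoeff (m : ℤ) : ℤ :=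
  if m = 0 then 1
  else if h : ∃ k : ℕ, 0 < k ∧ (2 * m = 3 * (k : ℤ) ^ 2 + k ∨ 2 * m = 3 * (k : ℤ) ^ 2 - k)
  then (-1) ^ h.choose
  else 0

/-- The inner sum `∑_{j=0}^{⌊(n-m)/m⌋} ω((n-m) - j·m)`. -/
noncomputable def pentaSum (n m : ℕ) : ℤ :=
  ∑ j ∈ Finset.range ((n - m) / m + 1), pentaCoeff (((n : ℤ) - m) - j * m)

/-- `Phi m` is the number of nonempty subsets `S` of `{1, 2, …, m}` such that
`gcd S` is relatively prime to `m`. -/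
noncomputable def Phi (m : ℕ) : ℕ :=
  ((Finset.Icc 1 m).powerset.filter
    fun S => S.Nonempty ∧ Nat.Coprime (S.gcd id) m).card

/-! Sort the nonempty subsets `S ⊆ {1, …, k}` by `e = gcd (gcd S) k`, a divisor of `k`. Dividing
by `e` maps the class of `e` bijectively onto the sets counted by `Φ (k / e)`, so
`∑_{d ∣ k} Φ d = 2^k - 1`. Substituting this for `2^k - 1` and interchanging the sums over `k` and
over `d ∣ k` leaves, for each `m`, the sum of `ω (n - k)` over the multiples `k = (j + 1) m ≤ n`,
which is `pentaSum n m`. -/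

open Finset

lemma card_powerset_filter_nonempty {α : Type*} (s : Finset α) :
    #{S ∈ s.powerset | S.Nonempty} = 2 ^ #s - 1 := by
  have : {S ∈ s.powerset | S.Nonempty} = s.powerset.erase ∅ := by
    ext S
    simp [nonempty_iff_ne_empty, and_comm]
  rw [this, card_erase_of_mem (empty_mem_powerset s), card_powerset]

lemma gcd_image_mul_right (S : Finset ℕ) (e : ℕ) :
    (S.image (· * e)).gcd id = S.gcd id * e := by
  rw [gcd_image]
  simpa using gcd_mul_right (s := S) (f := id) (a := e)

lemma gcd_mul_right_eq_right_iff_coprime {a m e : ℕ} (he : 0 < e) :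
    Nat.gcd (a * e) (m * e) = e ↔ a.Coprime m := by
  rw [Nat.gcd_mul_right, mul_eq_right₀ he.ne', Nat.Coprime]

lemma image_mul_subset_Icc {T : Finset ℕ} {m e : ℕ} (he : 0 < e) (hT : T ⊆ Icc 1 m) :
    T.image (· * e) ⊆ Icc 1 (m * e) := by
  intro y hy
  obtain ⟨x, hx, rfl⟩ := mem_image.mp hy
  have hx := mem_Icc.mp (hT hx)
  exact mem_Icc.mpr ⟨Nat.one_le_iff_ne_zero.mpr (Nat.mul_ne_zero (by omega) he.ne'),
    Nat.mul_le_mul_right e hx.2⟩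

lemma image_div_subset_Icc {S : Finset ℕ} {m e : ℕ} (hS : S ⊆ Icc 1 (m * e))
    (hdvd : ∀ x ∈ S, e ∣ x) : S.image (· / e) ⊆ Icc 1 m := by
  intro y hy
  obtain ⟨x, hx, rfl⟩ := mem_image.mp hy
  have hxI := mem_Icc.mp (hS hx)
  have he : 0 < e := Nat.pos_of_dvd_of_pos (hdvd x hx) hxI.1
  refine mem_Icc.mpr ⟨(Nat.one_le_div_iff he).mpr (Nat.le_of_dvd hxI.1 (hdvd x hx)), ?_⟩
  simpa [Nat.mul_div_cancel m he] using Nat.div_le_div_right (c := e) hxI.2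

lemma image_div_image_mul {e : ℕ} (he : 0 < e) (T : Finset ℕ) :
    (T.image (· * e)).image (· / e) = T := by
  rw [image_image]
  exact (image_congr fun x _ => Nat.mul_div_cancel x he).trans image_id

lemma image_mul_image_div {e : ℕ} {S : Finset ℕ} (hdvd : ∀ x ∈ S, e ∣ x) :
    (S.image (· / e)).image (· * e) = S := by
  rw [image_image]
  exact (image_congr fun x hx => Nat.div_mul_cancel (hdvd x hx)).trans image_id

lemma card_filter_gcd_eq_Phi {m e : ℕ} (he : 0 < e) :
    #{S ∈ {S ∈ (Icc 1 (m * e)).powerset | S.Nonempty} | Nat.gcd (S.gcd id) (m * e) = e} =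
      Phi m := by
  have dvd_of_mem {S : Finset ℕ} (hS : Nat.gcd (S.gcd id) (m * e) = e) : ∀ x ∈ S, e ∣ x :=
    fun x hx => hS ▸ (Nat.gcd_dvd_left _ _).trans (gcd_dvd hx)
  refine card_nbij' (·.image (· / e)) (·.image (· * e)) ?_ ?_ ?_ ?_
  · intro S hS
    simp only [coe_filter, mem_filter, mem_powerset, Set.mem_ofPred_eq] at hS ⊢
    obtain ⟨⟨hsub, hne⟩, hgcd⟩ := hS
    have hdvd := dvd_of_mem hgcd
    rw [← image_mul_image_div hdvd, gcd_image_mul_right,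
      gcd_mul_right_eq_right_iff_coprime he] at hgcd
    exact ⟨image_div_subset_Icc hsub hdvd, hne.image _, hgcd⟩
  · intro T hT
    simp only [coe_filter, mem_filter, mem_powerset, Set.mem_ofPred_eq] at hT ⊢
    obtain ⟨hsub, hne, hcop⟩ := hT
    refine ⟨⟨image_mul_subset_Icc he hsub, hne.image _⟩, ?_⟩
    rwa [gcd_image_mul_right, gcd_mul_right_eq_right_iff_coprime he]
  · intro S hS
    simp only [coe_filter, mem_filter, Set.mem_ofPred_eq] at hS
    exact image_mul_image_div (dvd_of_mem hS.2)
  · intro T _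
    exact image_div_image_mul he T

theorem sum_divisors_Phi (k : ℕ) : ∑ d ∈ k.divisors, Phi d = 2 ^ k - 1 := by
  obtain rfl | hk := k.eq_zero_or_pos
  · simp
  calc ∑ d ∈ k.divisors, Phi d = ∑ e ∈ k.divisors, Phi (k / e) :=
        (Nat.sum_div_divisors k Phi).symm
    _ = ∑ e ∈ k.divisors,
          #{S ∈ {S ∈ (Icc 1 k).powerset | S.Nonempty} | Nat.gcd (S.gcd id) k = e} := by
        refine sum_congr rfl fun e he => ?_
        obtain ⟨m, rfl⟩ := (Nat.mem_divisors.mp he).1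
        have he0 : 0 < e := Nat.pos_of_mul_pos_right hk
        rw [Nat.mul_div_cancel_left m he0, mul_comm, card_filter_gcd_eq_Phi he0]
    _ = #{S ∈ (Icc 1 k).powerset | S.Nonempty} :=
        (card_eq_sum_card_fiberwise fun S _ =>
          Nat.mem_divisors.mpr ⟨Nat.gcd_dvd_right _ _, hk.ne'⟩).symm
    _ = 2 ^ k - 1 := by rw [card_powerset_filter_nonempty, Nat.card_Icc, Nat.add_sub_cancel]

lemma filter_dvd_Icc_eq_image {m : ℕ} (hm : 0 < m) (n : ℕ) :
    {k ∈ Icc 1 n | m ∣ k} = (range (n / m)).image fun j => m * (j + 1) := by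
  ext k
  simp only [mem_filter, mem_Icc, mem_image, mem_range]
  constructor
  · rintro ⟨⟨hk1, hkn⟩, c, rfl⟩
    have hc : 0 < c := Nat.pos_of_mul_pos_left (by omega : 0 < m * c)
    refine ⟨c - 1, ?_, by rw [Nat.sub_add_cancel hc]⟩
    have : c ≤ n / m := (Nat.le_div_iff_mul_le hm).mpr (by rwa [mul_comm])
    omega
  · rintro ⟨j, hj, rfl⟩
    have : (j + 1) * m ≤ n := (Nat.le_div_iff_mul_le hm).mp hj
    exact ⟨⟨Nat.one_le_iff_ne_zero.mpr (by positivity), by rwa [mul_comm]⟩, dvd_mul_right m _⟩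

lemma pentaSum_eq_sum_filter_dvd {n m : ℕ} (hm : 0 < m) (hmn : m ≤ n) :
    pentaSum n m = ∑ k ∈ Icc 1 n with m ∣ k, pentaCoeff (n - k) := by
  have hinj : Set.InjOn (fun j => m * (j + 1)) (range (n / m)) := fun i _ j _ h =>
    Nat.succ_injective (Nat.eq_of_mul_eq_mul_left hm h)
  rw [filter_dvd_Icc_eq_image hm, sum_image hinj, pentaSum, ← Nat.add_div_right _ hm,
    Nat.sub_add_cancel hmn]
  refine sum_congr rfl fun j _ => congrArg pentaCoeff ?_
  push_cast
  ring

lemma sum_Icc_sum_divisors_mul {R : Type*} [CommSemiring R] (a g : ℕ → R) (n : ℕ) :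
    ∑ k ∈ Icc 1 n, (∑ d ∈ k.divisors, a d) * g k =
      ∑ d ∈ Icc 1 n, a d * ∑ k ∈ Icc 1 n with d ∣ k, g k := by
  have divisors_eq : ∀ k ∈ Icc 1 n, k.divisors = {d ∈ Icc 1 n | d ∣ k} := by
    intro k hk
    rw [mem_Icc] at hk
    ext d
    simp only [Nat.mem_divisors, mem_filter, mem_Icc]
    constructor
    · rintro ⟨hd, -⟩
      exact ⟨⟨Nat.pos_of_dvd_of_pos hd (by omega), (Nat.le_of_dvd (by omega) hd).trans hk.2⟩, hd⟩
    · rintro ⟨-, hd⟩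
      exact ⟨hd, by omega⟩
  calc ∑ k ∈ Icc 1 n, (∑ d ∈ k.divisors, a d) * g k
      = ∑ k ∈ Icc 1 n, ∑ d ∈ Icc 1 n, if d ∣ k then a d * g k else 0 := by
        refine sum_congr rfl fun k hk => ?_
        rw [divisors_eq k hk, sum_filter, sum_mul]
        simp only [ite_mul, zero_mul]
    _ = ∑ d ∈ Icc 1 n, a d * ∑ k ∈ Icc 1 n with d ∣ k, g k := by
        rw [sum_comm]
        simp only [mul_sum, sum_filter, mul_ite, mul_zero]

theorem euler_type_Phi_general (n : ℕ) :
    ∑ k ∈ Finset.Icc 1 n, ((2 : ℤ) ^ k - 1) * pentaCoeff ((n : ℤ) - k) =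
      ∑ m ∈ Finset.Icc 1 n, (Phi m : ℤ) * pentaSum n m := by
  have two_pow_sub_one (k : ℕ) : (2 : ℤ) ^ k - 1 = ∑ d ∈ k.divisors, (Phi d : ℤ) := by
    rw [← Nat.cast_sum, sum_divisors_Phi, Nat.cast_sub Nat.one_le_two_pow]
    norm_num
  simp only [two_pow_sub_one, sum_Icc_sum_divisors_mul]
  refine sum_congr rfl fun m hm => ?_
  rw [pentaSum_eq_sum_filter_dvd (mem_Icc.mp hm).1 (mem_Icc.mp hm).2]

theorem euler_type_Phi (n : ℕ) (hn : 0 < n) :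
    ∑ k ∈ Finset.Icc 1 n, ((2 : ℤ) ^ k - 1) * pentaCoeff ((n : ℤ) - k) =
      ∑ m ∈ Finset.Icc 1 n, (Phi m : ℤ) * pentaSum n m :=
  euler_type_Phi_general n
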